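/- Let f, I₀, I₁ : ℝ³ → [0,∞) be measurable, let φ be an orientation-preserving C¹ diffeomorphism of ℝ³, and let ψ be an orientation-preserving C¹ diffeomorphism of ℝ³ that is volume-preserving (|Dψ| ≡ 1) and preserves the density I₀ dx (equivalently, since |Dψ| ≡ 1, I₀∘ψ = I₀) and satisfies f∘ψ = f (which holds, e.g., whenever f = g∘I₀ for a function g, as when f is a soft thresholding of I₀). Then the matching energy E(φ) = ∫_{ℝ³} (1 − √(|Dφ|))²·f dy + ∫_{ℝ³} (√I₀ − √(|Dφ|·I₁∘φ))² dy satisfies E(φ∘ψ) = E(φ). In particular, if φ is a minimizer of E then so is φ∘ψ, so minimizers of the density-matching problem are not unique. -/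

import Mathlib

open MeasureTheory Real

noncomputable section

/-- `ℝ³` as a Euclidean space. -/
abbrev E3 := EuclideanSpace ℝ (Fin 3)

/-- An orientation-preserving C¹ diffeomorphism of ℝ³: a bijection which is C¹ with C¹
inverse and everywhere positive Jacobian determinant. -/
def IsOPDiffeo (χ : E3 → E3) : Prop :=
  Function.Bijective χ ∧ ContDiff ℝ 1 χ ∧ ContDiff ℝ 1 (Function.invFun χ) ∧
    ∀ x, 0 < (fderiv ℝ χ x).det

/-- The weighted diffeomorphic density-matching energy
`E(χ) = ∫ (1 − √|Dχ|)²·f dy + ∫ (√I₀ − √(|Dχ|·I₁∘χ))² dy`. -/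
def matchEnergy (f I₀ I₁ : E3 → ℝ) (χ : E3 → E3) : ℝ :=
  (∫ y : E3, (1 - Real.sqrt ((fderiv ℝ χ y).det)) ^ 2 * f y) +
  ∫ y : E3, (Real.sqrt (I₀ y) - Real.sqrt ((fderiv ℝ χ y).det * I₁ (χ y))) ^ 2

/-! Since `ψ` is volume preserving, the chain rule gives `|D(φ ∘ ψ)| = |Dφ| ∘ ψ`, and `f`, `I₀` are
`ψ`-invariant, so both integrands of `E(φ ∘ ψ)` are the integrands of `E(φ)` composed with `ψ`.
The change of variables `y ↦ ψ y`, whose Jacobian is `1`, then leaves both integrals unchanged. -/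

theorem det_fderiv_comp {𝕜 E : Type*} [NontriviallyNormedField 𝕜] [NormedAddCommGroup E]
    [NormedSpace 𝕜 E] {φ ψ : E → E} {y : E} (hφ : DifferentiableAt 𝕜 φ (ψ y))
    (hψ : DifferentiableAt 𝕜 ψ y) :
    (fderiv 𝕜 (φ ∘ ψ) y).det = (fderiv 𝕜 φ (ψ y)).det * (fderiv 𝕜 ψ y).det := by
  rw [fderiv_comp y hφ hψ]
  exact LinearMap.det_comp _ _

theorem integral_comp_eq_of_abs_det_fderiv_eq_one {E F : Type*} [NormedAddCommGroup E]
    [NormedSpace ℝ E] [FiniteDimensional ℝ E] [MeasurableSpace E] [BorelSpace E]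
    (μ : Measure E) [μ.IsAddHaarMeasure] [NormedAddCommGroup F] [NormedSpace ℝ F]
    {ψ : E → E} (hψ : Function.Bijective ψ) (hψd : Differentiable ℝ ψ)
    (hdet : ∀ y, |(fderiv ℝ ψ y).det| = 1) (g : E → F) :
    ∫ y, g (ψ y) ∂μ = ∫ y, g y ∂μ := by
  have h := integral_image_eq_integral_abs_det_fderiv_smul μ MeasurableSet.univ
    (fun x _ => (hψd x).hasFDerivAt.hasFDerivWithinAt) hψ.injective.injOn g
  simpa only [Set.image_univ, hψ.surjective.range_eq, Measure.restrict_univ, hdet, one_smul]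
    using h.symm

theorem matchEnergy_comp_eq {f I₀ I₁ : E3 → ℝ} {φ ψ : E3 → E3} (hφ : Differentiable ℝ φ)
    (hψ : Function.Bijective ψ) (hψd : Differentiable ℝ ψ)
    (hψvol : ∀ y, (fderiv ℝ ψ y).det = 1) (hI₀ψ : I₀ ∘ ψ = I₀) (hfψ : f ∘ ψ = f) :
    matchEnergy f I₀ I₁ (φ ∘ ψ) = matchEnergy f I₀ I₁ φ := by
  have hdet (y : E3) : (fderiv ℝ (φ ∘ ψ) y).det = (fderiv ℝ φ (ψ y)).det := by
    rw [det_fderiv_comp (hφ _) (hψd y), hψvol, mul_one]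
  have change_var := integral_comp_eq_of_abs_det_fderiv_eq_one (F := ℝ) volume hψ hψd
    (fun y => by rw [hψvol, abs_one])
  unfold matchEnergy
  rw [← change_var fun y => (1 - √(fderiv ℝ φ y).det) ^ 2 * f y,
    ← change_var fun y => (√(I₀ y) - √((fderiv ℝ φ y).det * I₁ (φ y))) ^ 2]
  have hf (y : E3) : f (ψ y) = f y := congrFun hfψ y
  have hI₀ (y : E3) : I₀ (ψ y) = I₀ y := congrFun hI₀ψ y
  simp only [hdet, Function.comp_apply, hf, hI₀]

theorem matchEnergy_comp_stabilizer_general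
    (f I₀ I₁ : E3 → ℝ)
    (φ ψ : E3 → E3)
    (hφ : IsOPDiffeo φ) (hψ : IsOPDiffeo ψ)
    (hψvol : ∀ y, (fderiv ℝ ψ y).det = 1)
    (hI₀ψ : I₀ ∘ ψ = I₀) (hfψ : f ∘ ψ = f) :
    matchEnergy f I₀ I₁ (φ ∘ ψ) = matchEnergy f I₀ I₁ φ ∧
    ((∀ χ, IsOPDiffeo χ → matchEnergy f I₀ I₁ φ ≤ matchEnergy f I₀ I₁ χ) →
      ∀ χ, IsOPDiffeo χ → matchEnergy f I₀ I₁ (φ ∘ ψ) ≤ matchEnergy f I₀ I₁ χ) := by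
  have hE : matchEnergy f I₀ I₁ (φ ∘ ψ) = matchEnergy f I₀ I₁ φ :=
    matchEnergy_comp_eq (hφ.2.1.differentiable one_ne_zero) hψ.1
      (hψ.2.1.differentiable one_ne_zero) hψvol hI₀ψ hfψ
  exact ⟨hE, fun hmin χ hχ => hE ▸ hmin χ hχ⟩

/-- **Non-uniqueness of minimizers of the density-matching energy.**
Let `f, I₀, I₁ : ℝ³ → [0,∞)` be measurable, `φ` an orientation-preserving C¹ diffeomorphism
of ℝ³, and `ψ` an orientation-preserving C¹ diffeomorphism that is volume-preserving
(`|Dψ| ≡ 1`), preserves the density `I₀ dx` (`I₀ ∘ ψ = I₀`), and satisfies `f ∘ ψ = f`.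
Then `E(φ ∘ ψ) = E(φ)`; in particular if `φ` minimizes `E` over orientation-preserving C¹
diffeomorphisms then so does `φ ∘ ψ`. -/
theorem matchEnergy_comp_stabilizer
    (f I₀ I₁ : E3 → ℝ)
    (hfm : Measurable f) (hI₀m : Measurable I₀) (hI₁m : Measurable I₁)
    (hf0 : ∀ x, 0 ≤ f x) (hI₀0 : ∀ x, 0 ≤ I₀ x) (hI₁0 : ∀ x, 0 ≤ I₁ x)
    (φ ψ : E3 → E3)
    (hφ : IsOPDiffeo φ) (hψ : IsOPDiffeo ψ)
    (hψvol : ∀ y, (fderiv ℝ ψ y).det = 1)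
    (hI₀ψ : I₀ ∘ ψ = I₀) (hfψ : f ∘ ψ = f) :
    matchEnergy f I₀ I₁ (φ ∘ ψ) = matchEnergy f I₀ I₁ φ ∧
    ((∀ χ, IsOPDiffeo χ → matchEnergy f I₀ I₁ φ ≤ matchEnergy f I₀ I₁ χ) →
      ∀ χ, IsOPDiffeo χ → matchEnergy f I₀ I₁ (φ ∘ ψ) ≤ matchEnergy f I₀ I₁ χ) :=
  matchEnergy_comp_stabilizer_general f I₀ I₁ φ ψ hφ hψ hψvol hI₀ψ hfψ
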